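/- arXiv:2411.05391 — 3 statements merged into one kernel-verified Lean document; each statement's English description precedes it below -/
import Mathlib

section
/- There is no real-valued scoring rule S for binary outcomes such that the average score Av_S(a,b,c,d) equals the Youden index Youden(a,b,c,d) for every quadruple of natural numbers (a,b,c,d) with a + c ≠ 0 and b + d ≠ 0. -/
/-- The Youden index of a 2×2 contingency table `(a,b,c,d)` (real arithmetic,
with the convention `x/0 = 0`). -/
noncomputable def Youden (a b c d : ℕ) : ℝ :=
  (a : ℝ) / ((a : ℝ) + (c : ℝ)) + (d : ℝ) / ((b : ℝ) + (d : ℝ)) - 1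

/-- The average score of the scoring rule `S : ℝ → Fin 2 → ℝ` on the table
`(a,b,c,d)`, with predicted probabilities `p₁ = a/(a+b)` and `p₀ = c/(c+d)`
(convention `0/0 = 0`). -/
noncomputable def Av (S : ℝ → Fin 2 → ℝ) (a b c d : ℕ) : ℝ :=
  (1 / ((a : ℝ) + b + c + d)) *
    ((a : ℝ) * S ((a : ℝ) / ((a : ℝ) + (b : ℝ))) 1
      + (b : ℝ) * S ((a : ℝ) / ((a : ℝ) + (b : ℝ))) 0
      + (c : ℝ) * S ((c : ℝ) / ((c : ℝ) + (d : ℝ))) 0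
      + (d : ℝ) * S ((c : ℝ) / ((c : ℝ) + (d : ℝ))) 1)

/-- There is no real-valued scoring rule `S` for binary outcomes whose average
score equals the Youden index for every table `(a,b,c,d)` with `a + c ≠ 0` and
`b + d ≠ 0`. -/
theorem no_scoring_rule_average_equals_youden :
    ¬ ∃ S : ℝ → Fin 2 → ℝ, ∀ a b c d : ℕ, a + c ≠ 0 → b + d ≠ 0 →
      Av S a b c d = Youden a b c d := by
  rintro ⟨S, h⟩
  have h1 := h 2 1 0 0 (by norm_num) (by norm_num)
  have h2 := h 2 1 1 2 (by norm_num) (by norm_num)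
  have h3 := h 0 0 1 2 (by norm_num) (by norm_num)
  simp only [Av, Youden] at h1 h2 h3
  norm_num at h1 h2 h3
  linarith
end

section
/- Suppose S is a real-valued scoring rule for binary outcomes such that Av_S(a,b,c,d) = Youden(a,b,c,d) for every quadruple of natural numbers (a,b,c,d) with a + c ≠ 0 and b + d ≠ 0. Then for all natural numbers c ≥ 1 and d ≥ 1 one has S(c/(c+d), 0) = −(d/c)·S(c/(c+d), 1). -/
theorem Youden_zero_zero (c : ℕ) {d : ℕ} (hd : d ≠ 0) : Youden 0 0 c d = 0 := by
  have hd' : (d : ℝ) ≠ 0 := Nat.cast_ne_zero.mpr hd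
  simp [Youden, hd']

theorem Av_zero_zero (S : ℝ → Fin 2 → ℝ) (c d : ℕ) :
    Av S 0 0 c d = ((c : ℝ) * S (c / (c + d)) 0 + d * S (c / (c + d)) 1) / (c + d) := by
  simp only [Av, Nat.cast_zero, zero_mul, zero_add]
  ring

/-- If the average score of `S` equals the Youden index on all admissible tables,
then `S(c/(c+d), 0) = -(d/c)·S(c/(c+d), 1)` for all `c, d ≥ 1`. -/
theorem scoring_rule_average_case_a_b_zero (S : ℝ → Fin 2 → ℝ)
    (hS : ∀ a b c d : ℕ, a + c ≠ 0 → b + d ≠ 0 → Av S a b c d = Youden a b c d)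
    (c d : ℕ) (hc : 1 ≤ c) (hd : 1 ≤ d) :
    S ((c : ℝ) / ((c : ℝ) + (d : ℝ))) 0
      = -((d : ℝ) / (c : ℝ)) * S ((c : ℝ) / ((c : ℝ) + (d : ℝ))) 1 := by
  have hc' : (0 : ℝ) < c := by exact_mod_cast hc
  have hd' : (0 : ℝ) < d := by exact_mod_cast hd
  have hAv := hS 0 0 c d (by omega) (by omega)
  rw [Av_zero_zero, Youden_zero_zero c (by omega), div_eq_zero_iff] at hAv
  have hbalance : (c : ℝ) * S (c / (c + d)) 0 + d * S (c / (c + d)) 1 = 0 :=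
    hAv.resolve_right (by positivity)
  field_simp
  linarith
end

section
/- Suppose S is a real-valued scoring rule for binary outcomes such that Av_S(a,b,c,d) = Youden(a,b,c,d) for every quadruple of natural numbers (a,b,c,d) with a + c ≠ 0 and b + d ≠ 0. Then for all natural numbers a ≥ 1 and b ≥ 1 one has S(a/(a+b), 0) = −(a/b)·S(a/(a+b), 1). -/
/-- If the average score of `S` equals the Youden index on all admissible tables,
then `S(a/(a+b), 0) = -(a/b)·S(a/(a+b), 1)` for all `a, b ≥ 1`. -/
theorem scoring_rule_average_case_c_d_zero (S : ℝ → Fin 2 → ℝ)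
    (hS : ∀ a b c d : ℕ, a + c ≠ 0 → b + d ≠ 0 → Av S a b c d = Youden a b c d)
    (a b : ℕ) (ha : 1 ≤ a) (hb : 1 ≤ b) :
    S ((a : ℝ) / ((a : ℝ) + (b : ℝ))) 0
      = -((a : ℝ) / (b : ℝ)) * S ((a : ℝ) / ((a : ℝ) + (b : ℝ))) 1 := by
  have ha' : (0:ℝ) < a := by exact_mod_cast ha
  have hb' : (0:ℝ) < b := by exact_mod_cast hb
  have hab : (0:ℝ) < (a:ℝ) + b := by linarith
  have h := hS a b 0 0 (by omega) (by omega)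
  simp only [Av, Youden, Nat.cast_zero] at h
  simp only [zero_mul, add_zero, zero_div] at h
  rw [div_self ha'.ne'] at h
  field_simp at h ⊢
  nlinarith [h]
end
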